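/- arXiv:2209.12993 — 6 statements merged into one kernel-verified Lean document; each statement's English description precedes it below -/
import Mathlib

section
/- Let T ≥ 1 and l ≥ 1 be natural numbers and let f₀ : Fin l → Fin T be a function whose range has cardinality b. Under the uniform probability distribution on the finite set of all functions g : Fin l → Fin T, the probability that g has the same kernel as f₀ (i.e., for all a, a', g a = g a' iff f₀ a = f₀ a') equals (∏_{i=0}^{b−1} (1 − i/T)) / T^{l−b}. In particular, setting n := l − b, this probability equals (∏_{i=0}^{l−n−1} (1 − i/T)) / T^n and depends only on l, T and n, not on the sizes of the kernel classes of f₀. -/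
open Finset in
lemma count_same_kernel (T l : ℕ) (f₀ : Fin l → Fin T) :
    (Finset.univ.filter (fun g : Fin l → Fin T =>
        ∀ a a' : Fin l, g a = g a' ↔ f₀ a = f₀ a')).card
      = T.descFactorial (Finset.univ.image f₀).card := by
  classical
  set S := Finset.univ.image f₀ with hS
  have hpick : ∀ s ∈ S, ∃ a : Fin l, f₀ a = s := by
    intro s hs
    obtain ⟨a, _, ha⟩ := Finset.mem_image.mp hs
    exact ⟨a, ha⟩
  let pick : ∀ s ∈ S, Fin l := fun s hs => (hpick s hs).choose
  have hpick' : ∀ s (hs : s ∈ S), f₀ (pick s hs) = s := fun s hs => (hpick s hs).choose_spec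
  have hcs := Fintype.card_subtype
    (p := fun g : Fin l → Fin T => ∀ a a', g a = g a' ↔ f₀ a = f₀ a')
  rw [← hcs]
  have e : {g : Fin l → Fin T // ∀ a a', g a = g a' ↔ f₀ a = f₀ a'} ≃ (↥S ↪ Fin T) :=
  { toFun := fun gp => ⟨fun s => gp.1 (pick s.1 s.2), by
      rintro ⟨s, hs⟩ ⟨s', hs'⟩ h
      have h2 : f₀ (pick s hs) = f₀ (pick s' hs') := (gp.2 _ _).mp h
      have h3 : s = s' := by rw [← hpick' s hs, ← hpick' s' hs']; exact h2
      exact Subtype.ext h3⟩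
    invFun := fun h => ⟨fun a => h ⟨f₀ a, Finset.mem_image_of_mem f₀ (Finset.mem_univ a)⟩, by
      intro a a'
      constructor
      · intro hh
        exact Subtype.ext_iff.mp (h.injective hh)
      · intro hh
        exact congrArg h (Subtype.ext hh)⟩
    left_inv := by
      rintro ⟨g, hg⟩
      apply Subtype.ext
      funext a
      exact (hg _ _).mpr (hpick' (f₀ a) (Finset.mem_image_of_mem f₀ (Finset.mem_univ a)))
    right_inv := by
      intro h
      apply Function.Embedding.ext
      intro s
      exact congrArg h (Subtype.ext (hpick' s.1 s.2)) }
  rw [Fintype.card_congr e, Fintype.card_embedding_eq, Fintype.card_coe, Fintype.card_fin]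

/-- Under the uniform distribution on functions `g : Fin l → Fin T`,
the probability that `g` has the same kernel as `f₀` (whose range has cardinality
`b`) equals `(∏_{i=0}^{b−1} (1 − i/T)) / T^(l−b)`; in particular, with `n := l − b`
it equals `(∏_{i=0}^{l−n−1} (1 − i/T)) / T^n`, depending only on `l`, `T`, `n`. -/
theorem same_kernel_probability (T l b : ℕ) (hT : 1 ≤ T) (hl : 1 ≤ l)
    (f₀ : Fin l → Fin T) (hb : (Finset.univ.image f₀).card = b) :
    ((Finset.univ.filter (fun g : Fin l → Fin T =>
        ∀ a a' : Fin l, g a = g a' ↔ f₀ a = f₀ a')).card : ℝ) /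
        (Fintype.card (Fin l → Fin T)) =
      (∏ i ∈ Finset.range b, (1 - (i : ℝ) / T)) / (T : ℝ) ^ (l - b) ∧
    ((Finset.univ.filter (fun g : Fin l → Fin T =>
        ∀ a a' : Fin l, g a = g a' ↔ f₀ a = f₀ a')).card : ℝ) /
        (Fintype.card (Fin l → Fin T)) =
      (∏ i ∈ Finset.range (l - (l - b)), (1 - (i : ℝ) / T)) / (T : ℝ) ^ (l - b) := by
  have hbT : b ≤ T := by
    rw [← hb]
    calc (Finset.univ.image f₀).card ≤ Fintype.card (Fin T) := Finset.card_le_univ _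
    _ = T := Fintype.card_fin T
  have hbl : b ≤ l := by
    rw [← hb]
    calc (Finset.univ.image f₀).card ≤ (Finset.univ : Finset (Fin l)).card :=
          Finset.card_image_le
    _ = l := by simp
  have hcount := count_same_kernel T l f₀
  rw [hb] at hcount
  have hcard : (Fintype.card (Fin l → Fin T) : ℝ) = (T : ℝ) ^ l := by
    simp [Fintype.card_fun]
  have hT0 : (T : ℝ) ≠ 0 := by positivity
  have hprod : ∏ i ∈ Finset.range b, (1 - (i : ℝ) / T)
      = (T.descFactorial b : ℝ) / (T : ℝ) ^ b := by
    have hTb : (T : ℝ) ^ b = ∏ _i ∈ Finset.range b, (T : ℝ) := by simp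
    rw [Nat.descFactorial_eq_prod_range, Nat.cast_prod, hTb, ← Finset.prod_div_distrib]
    apply Finset.prod_congr rfl
    intro i hi
    have hiT : i ≤ T := le_trans (le_of_lt (Finset.mem_range.mp hi)) hbT
    rw [Nat.cast_sub hiT]
    field_simp
  have key : ((Finset.univ.filter (fun g : Fin l → Fin T =>
        ∀ a a' : Fin l, g a = g a' ↔ f₀ a = f₀ a')).card : ℝ) /
        (Fintype.card (Fin l → Fin T)) =
      (∏ i ∈ Finset.range b, (1 - (i : ℝ) / T)) / (T : ℝ) ^ (l - b) := by
    rw [hcount, hcard, hprod, div_div, ← pow_add, Nat.add_sub_cancel' hbl]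
  refine ⟨key, ?_⟩
  rw [Nat.sub_sub_self hbl]
  exact key
end

section
/- For natural numbers T ≥ 1, l ≥ 1 and n, define the signature-match probability P_T(l,n) := (∏_{i=0}^{l−n−1} (1 − i/T)) / T^n, a real number defined for max(0, l−T) ≤ n ≤ l−1. Then P_T(l,n) is monotonically decreasing in n: for every n with max(0, l−T) ≤ n and n + 2 ≤ l, we have P_T(l, n+1) ≤ P_T(l, n). -/
/-! Peeling off the last factor of the product gives `P_T(l,n) = (T − (l−n−1)) · P_T(l,n+1)`,
and the factor `T − (l−n−1)` is at least `1` precisely when `n ≥ l − T`. -/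

/-- The signature-match probability `P_T(l,n) = (∏_{i=0}^{l−n−1} (1 − i/T)) / T^n`. -/
noncomputable def sigProb (T l n : ℕ) : ℝ :=
  (∏ i ∈ Finset.range (l - n), (1 - (i : ℝ) / T)) / (T : ℝ) ^ n

lemma sigProb_nonneg {T l n : ℕ} (h : l ≤ n + T + 1) : 0 ≤ sigProb T l n := by
  refine div_nonneg (Finset.prod_nonneg fun i hi => ?_) (by positivity)
  have hiT : i ≤ T := by rw [Finset.mem_range] at hi; omega
  rcases Nat.eq_zero_or_pos T with rfl | hT
  · simp
  · rw [sub_nonneg, div_le_one (by positivity)]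
    exact_mod_cast hiT

lemma sigProb_eq_mul_sigProb_succ {T l n : ℕ} (hT : T ≠ 0) (h : n < l) :
    sigProb T l n = ((T : ℝ) - (l - (n + 1) : ℕ)) * sigProb T l (n + 1) := by
  have hl : l - n = l - (n + 1) + 1 := by omega
  unfold sigProb
  rw [hl, Finset.prod_range_succ, pow_succ]
  field_simp

theorem sigProb_anti_in_n_general (T l n : ℕ)
    (hn_lo : max 0 (l - T) ≤ n) (hn_hi : n + 2 ≤ l) :
    sigProb T l (n + 1) ≤ sigProb T l n := by
  have hlT : l ≤ n + T := by omega
  have hfactor : 1 ≤ (T : ℝ) - (l - (n + 1) : ℕ) := by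
    have : (l - (n + 1) : ℕ) + 1 ≤ T := by omega
    rw [le_sub_iff_add_le']
    exact_mod_cast this
  rw [sigProb_eq_mul_sigProb_succ (n := n) (by omega) (by omega)]
  exact le_mul_of_one_le_left (sigProb_nonneg (by omega)) hfactor

/-- `P_T(l,n)` is monotonically decreasing in `n`:
for `max(0, l−T) ≤ n` and `n + 2 ≤ l`, `P_T(l, n+1) ≤ P_T(l, n)`. -/
theorem sigProb_anti_in_n (T l n : ℕ) (hT : 1 ≤ T) (hl : 1 ≤ l)
    (hn_lo : max 0 (l - T) ≤ n) (hn_hi : n + 2 ≤ l) :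
    sigProb T l (n + 1) ≤ sigProb T l n :=
  sigProb_anti_in_n_general T l n hn_lo hn_hi
end

section
/- Let T ≥ 2, l ≥ 1, n be natural numbers such that (l : ℝ) ≤ T − √T + 1 and n + 3 ≤ l. Then P_T(l−1, n+1) ≤ P_T(l, n), where P_T(l,n) := (∏_{i=0}^{l−n−1} (1 − i/T)) / T^n. -/
/-- for `T ≥ 2`, `(l : ℝ) ≤ T − √T + 1` and `n + 3 ≤ l`,
`P_T(l−1, n+1) ≤ P_T(l, n)`. -/
theorem sigProb_lemma (T l n : ℕ) (hT : 2 ≤ T)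
    (hl : (l : ℝ) ≤ (T : ℝ) - Real.sqrt T + 1) (hn : n + 3 ≤ l) :
    sigProb T (l - 1) (n + 1) ≤ sigProb T l n := by
  set k := l - n - 2 with hkdef
  have hlk : l = k + n + 2 := by omega
  have h1 : l - n = k + 2 := by omega
  have h2 : l - 1 - (n + 1) = k := by omega
  have hTpos : (0 : ℝ) < T := by positivity
  have ha : Real.sqrt T * Real.sqrt T = (T : ℝ) := Real.mul_self_sqrt (le_of_lt hTpos)
  have ha1 : (1 : ℝ) ≤ Real.sqrt T := by
    rw [show (1:ℝ) = Real.sqrt 1 from (Real.sqrt_one).symm]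
    exact Real.sqrt_le_sqrt (by exact_mod_cast Nat.one_le_of_lt hT)
  have hk1 : (k : ℝ) + 1 ≤ (T : ℝ) - Real.sqrt T := by
    have : (l : ℝ) = (k : ℝ) + n + 2 := by exact_mod_cast congrArg (Nat.cast : ℕ → ℝ) hlk
    have hn0 : (0 : ℝ) ≤ (n : ℝ) := Nat.cast_nonneg n
    linarith
  -- each factor in the big product is nonneg
  have hfac : ∀ i ∈ Finset.range k, (0 : ℝ) ≤ 1 - (i : ℝ) / T := by
    intro i hi
    have hi' : (i : ℝ) ≤ (k : ℝ) := by
      have := Finset.mem_range.mp hi; exact_mod_cast le_of_lt this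
    have : (i : ℝ) ≤ (T : ℝ) := by linarith
    have := div_le_one_of_le₀ this (le_of_lt hTpos)
    linarith
  have hP : (0 : ℝ) ≤ ∏ i ∈ Finset.range k, (1 - (i : ℝ) / T) :=
    Finset.prod_nonneg hfac
  unfold sigProb
  rw [h1, h2, Finset.prod_range_succ, Finset.prod_range_succ]
  set P := ∏ i ∈ Finset.range k, (1 - (i : ℝ) / T) with hPdef
  have hb : Real.sqrt T ≤ (T : ℝ) - ((k : ℝ) + 1) := by linarith
  have hc : Real.sqrt T + 1 ≤ (T : ℝ) - (k : ℝ) := by linarith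
  have hs0 : (0 : ℝ) ≤ Real.sqrt T := Real.sqrt_nonneg _
  have hprod : (Real.sqrt T + 1) * Real.sqrt T ≤ ((T : ℝ) - k) * ((T : ℝ) - ((k : ℝ) + 1)) :=
    mul_le_mul hc hb hs0 (by linarith)
  have e1 : (1 - (k : ℝ) / T) = ((T : ℝ) - k) / T := by field_simp
  have e2 : (1 - ((k : ℝ) + 1) / T) = ((T : ℝ) - ((k : ℝ) + 1)) / T := by field_simp
  have hkey : (1 : ℝ) ≤ (1 - (k : ℝ) / T) * (1 - ((k : ℝ) + 1) / T) * T := by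
    rw [e1, e2, div_mul_div_comm, div_mul_eq_mul_div, le_div_iff₀ (by positivity)]
    nlinarith [hprod, ha, hTpos]
  have hTn : (0 : ℝ) < (T : ℝ) ^ n := by positivity
  rw [pow_succ, div_le_div_iff₀ (by positivity) (by positivity)]
  push_cast
  nlinarith [mul_le_mul_of_nonneg_left hkey (mul_nonneg hP hTn.le), hP, hTn]
end

section
/- Let T ≥ 2 be a natural number, p* ∈ (0,1) a real threshold, and for each l ≥ 1 for which it exists let n*_l denote the least natural number n with max(0, l−T) ≤ n ≤ l−1 and P_T(l,n) ≤ p*. Suppose l ≥ 2 satisfies (l : ℝ) ≤ T − √T + 1, n*_l exists, and n*_l + 3 ≤ l. Then n*_{l−1} exists and n*_{l−1} ≤ n*_l + 1. -/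
/-- Corollary 1: let `n*_l` be the least `n` with
`max(0, l−T) ≤ n ≤ l−1` and `P_T(l,n) ≤ p*`. If `l ≥ 2`, `(l : ℝ) ≤ T − √T + 1`,
`n*_l` exists and `n*_l + 3 ≤ l`, then `n*_{l−1}` exists and `n*_{l−1} ≤ n*_l + 1`. -/
theorem nstar_pred_le (T l : ℕ) (p : ℝ) (hT : 2 ≤ T) (hp0 : 0 < p) (hp1 : p < 1)
    (hl2 : 2 ≤ l) (hl : (l : ℝ) ≤ (T : ℝ) - Real.sqrt T + 1)
    (nstar : ℕ)
    (hstar : IsLeast {n : ℕ | max 0 (l - T) ≤ n ∧ n ≤ l - 1 ∧ sigProb T l n ≤ p} nstar)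
    (hgap : nstar + 3 ≤ l) :
    ∃ m : ℕ,
      IsLeast {n : ℕ | max 0 (l - 1 - T) ≤ n ∧ n ≤ l - 1 - 1 ∧ sigProb T (l - 1) n ≤ p} m ∧
      m ≤ nstar + 1 := by
  obtain ⟨⟨hlow, hhigh, hP⟩, hmin⟩ := hstar
  have hlow' : l - T ≤ nstar := le_trans (le_max_right _ _) hlow
  have hTpos : (0:ℝ) < T := by exact_mod_cast (by omega : 0 < T)
  have hs1 : (1:ℝ) ≤ Real.sqrt T := by
    rw [show (1:ℝ) = Real.sqrt 1 by simp]
    exact Real.sqrt_le_sqrt (by exact_mod_cast (by omega : 1 ≤ T))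
  set b := l - nstar with hb
  have hb3 : 3 ≤ b := by omega
  -- any index i ≤ l - 1 gives (i:ℝ) ≤ T - √T
  have hidx : ∀ i : ℕ, i ≤ l - 1 → (i:ℝ) ≤ (T:ℝ) - Real.sqrt T := by
    intro i hi
    have : (i:ℝ) ≤ (l:ℝ) - 1 := by
      have : (i:ℝ) ≤ ((l-1:ℕ):ℝ) := by exact_mod_cast hi
      have hcast : ((l-1:ℕ):ℝ) = (l:ℝ) - 1 := by
        push_cast [Nat.cast_sub (by omega : 1 ≤ l)]; ring
      linarith [hcast ▸ this]
    linarith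
  have hfacpos : ∀ i : ℕ, i ≤ l - 1 → (0:ℝ) < 1 - (i:ℝ)/T := by
    intro i hi
    have := hidx i hi
    rw [sub_pos, div_lt_one hTpos]
    linarith
  -- positivity of the truncated product
  have hP2pos : (0:ℝ) < ∏ i ∈ Finset.range (b - 2), (1 - (i:ℝ) / T) := by
    apply Finset.prod_pos
    intro i hi
    exact hfacpos i (by simp at hi; omega)
  -- key inequality
  have hx : ((b-1:ℕ):ℝ) ≤ (T:ℝ) - Real.sqrt T := hidx (b-1) (by omega)
  have hxm : ((b-2:ℕ):ℝ) = ((b-1:ℕ):ℝ) - 1 := by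
    have h : (b - 2) + 1 = b - 1 := by omega
    rw [← h]; push_cast; ring
  have key : 1/(T:ℝ) ≤ (1 - ((b-2:ℕ):ℝ)/T) * (1 - ((b-1:ℕ):ℝ)/T) := by
    set x := ((b-1:ℕ):ℝ)
    have hsq : Real.sqrt T * Real.sqrt T = (T:ℝ) :=
      Real.mul_self_sqrt (le_of_lt hTpos)
    rw [hxm, div_le_iff₀ hTpos]
    have h1 : 1 - (x-1)/T = ((T:ℝ) - x + 1)/T := by field_simp; ring
    have h2 : 1 - x/T = ((T:ℝ) - x)/T := by field_simp
    rw [h1, h2, div_mul_div_comm, div_mul_eq_mul_div, le_div_iff₀ (by positivity)]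
    have hu : Real.sqrt T ≤ (T:ℝ) - x := by linarith
    have h4 : (T:ℝ) ≤ ((T:ℝ)-x)*((T:ℝ)-x) := by
      nlinarith [hsq, hu, Real.sqrt_nonneg (T:ℝ)]
    nlinarith [h4, hTpos, hu, hs1, Real.sqrt_nonneg (T:ℝ)]
  -- sigProb T (l-1) (nstar+1) ≤ sigProb T l nstar ≤ p
  have hmem3 : sigProb T (l - 1) (nstar + 1) ≤ p := by
    have hstep : sigProb T (l - 1) (nstar + 1) ≤ sigProb T l nstar := by
      unfold sigProb
      have e1 : l - 1 - (nstar + 1) = b - 2 := by omega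
      have e2 : l - nstar = b := rfl
      have e3 : b = (b - 2) + 1 + 1 := by omega
      rw [e1, e2, e3, Finset.prod_range_succ, Finset.prod_range_succ]
      have e4 : (b - 2) + 1 = b - 1 := by omega
      rw [e4]
      rw [pow_succ]
      rw [div_le_div_iff₀ (by positivity) (by positivity)]
      have hTp : (0:ℝ) < (T:ℝ)^nstar := by positivity
      have := mul_le_mul_of_nonneg_left key (le_of_lt hP2pos)
      calc (∏ i ∈ Finset.range (b-2), (1 - (i:ℝ)/T)) * (T:ℝ)^nstar
          = ((∏ i ∈ Finset.range (b-2), (1 - (i:ℝ)/T)) * (1/(T:ℝ))) * ((T:ℝ)^nstar * T) := by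
            field_simp
        _ ≤ ((∏ i ∈ Finset.range (b-2), (1 - (i:ℝ)/T)) *
              ((1 - ((b-2:ℕ):ℝ)/T) * (1 - ((b-1:ℕ):ℝ)/T))) * ((T:ℝ)^nstar * T) := by
            apply mul_le_mul_of_nonneg_right this (by positivity)
        _ = (∏ i ∈ Finset.range (b-2), (1 - (i:ℝ)/T)) * (1 - ((b-2:ℕ):ℝ)/T) *
              (1 - ((b-1:ℕ):ℝ)/T) * ((T:ℝ)^nstar * T) := by ring
    linarith
  have hne : (nstar + 1) ∈ {n : ℕ | max 0 (l - 1 - T) ≤ n ∧ n ≤ l - 1 - 1 ∧ sigProb T (l - 1) n ≤ p} := by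
    refine ⟨by simp; omega, by omega, hmem3⟩
  refine ⟨sInf _, ⟨Nat.sInf_mem ⟨_, hne⟩, fun x hx => Nat.sInf_le hx⟩, Nat.sInf_le hne⟩
end

section
/- Let T ≥ 2 be a natural number, p* ∈ (0,1) a real threshold, and for each l let n*_l denote the least natural number n with max(0, l−T) ≤ n ≤ l−1 and P_T(l,n) ≤ p*, when it exists. If n*_l exists for some l ≥ 1 and l' > l is such that l' − T ≤ n*_l, then n*_{l'} exists and n*_{l'} ≤ n*_l. That is, n*_l is monotonically decreasing in l (on the range where it is defined and valid). -/
/-- let `n*_l` be the least `n` with `max(0, l−T) ≤ n ≤ l−1` and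
`P_T(l,n) ≤ p*`. If `n*_l` exists for some `l ≥ 1`, and `l' > l` satisfies
`l' − T ≤ n*_l`, then `n*_{l'}` exists and `n*_{l'} ≤ n*_l`:
`n*` is monotonically decreasing in `l`. -/
theorem nstar_antitone (T l l' : ℕ) (p : ℝ) (hT : 2 ≤ T) (hp0 : 0 < p) (hp1 : p < 1)
    (hl : 1 ≤ l) (hll' : l < l')
    (nstar : ℕ)
    (hstar : IsLeast {n : ℕ | max 0 (l - T) ≤ n ∧ n ≤ l - 1 ∧ sigProb T l n ≤ p} nstar)
    (hrange : l' - T ≤ nstar) :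
    ∃ m : ℕ,
      IsLeast {n : ℕ | max 0 (l' - T) ≤ n ∧ n ≤ l' - 1 ∧ sigProb T l' n ≤ p} m ∧
      m ≤ nstar := by
  obtain ⟨⟨h1, h2, h3⟩, hmin⟩ := hstar
  have hT0 : (0 : ℝ) < T := by positivity
  -- factors are nonneg and ≤ 1 for i < l' - nstar (since l' - nstar ≤ T)
  have hle : l' - nstar ≤ T := by omega
  have hfac : ∀ i ∈ Finset.range (l' - nstar), (0 : ℝ) ≤ 1 - (i : ℝ) / T ∧
      1 - (i : ℝ) / T ≤ 1 := by
    intro i hi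
    simp only [Finset.mem_range] at hi
    have hiT : (i : ℝ) ≤ T := by exact_mod_cast (by omega : i ≤ T)
    constructor
    · have : (i : ℝ) / T ≤ 1 := by rw [div_le_one hT0]; exact hiT
      linarith
    · have : (0 : ℝ) ≤ (i : ℝ) / T := by positivity
      linarith
  have hsplit : l' - nstar = (l - nstar) + (l' - l) := by omega
  have hprod : ∏ i ∈ Finset.range (l' - nstar), (1 - (i : ℝ) / T) ≤
      ∏ i ∈ Finset.range (l - nstar), (1 - (i : ℝ) / T) := by
    rw [hsplit, Finset.prod_range_add]
    have hP : (0 : ℝ) ≤ ∏ i ∈ Finset.range (l - nstar), (1 - (i : ℝ) / T) :=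
      Finset.prod_nonneg fun i hi => (hfac i (by
        simp only [Finset.mem_range] at hi ⊢; omega)).1
    have hQ1 : ∏ i ∈ Finset.range (l' - l), (1 - ((l - nstar + i : ℕ) : ℝ) / T) ≤ 1 :=
      Finset.prod_le_one
        (fun i hi => (hfac _ (by simp only [Finset.mem_range] at hi ⊢; omega)).1)
        (fun i hi => (hfac _ (by simp only [Finset.mem_range] at hi ⊢; omega)).2)
    have hQ0 : (0 : ℝ) ≤ ∏ i ∈ Finset.range (l' - l), (1 - ((l - nstar + i : ℕ) : ℝ) / T) :=
      Finset.prod_nonneg fun i hi => (hfac _ (by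
        simp only [Finset.mem_range] at hi ⊢; omega)).1
    nlinarith [mul_le_of_le_one_right hP hQ1]
  have hsig : sigProb T l' nstar ≤ sigProb T l nstar := by
    unfold sigProb
    have : (0:ℝ) < (T:ℝ) ^ nstar := by positivity
    gcongr
  have hmem : nstar ∈ {n : ℕ | max 0 (l' - T) ≤ n ∧ n ≤ l' - 1 ∧ sigProb T l' n ≤ p} :=
    ⟨by simp; omega, by omega, hsig.trans h3⟩
  obtain ⟨m, hm, hm2⟩ := Nat.lt_wfRel.wf.has_min
    {n : ℕ | max 0 (l' - T) ≤ n ∧ n ≤ l' - 1 ∧ sigProb T l' n ≤ p} ⟨nstar, hmem⟩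
  exact ⟨m, ⟨hm, fun x hx => not_lt.1 (hm2 x hx)⟩, not_lt.1 (hm2 nstar hmem)⟩
end

section
/- Let T ≥ 2 be a natural number. Then (T : ℝ) · (1 − 1/T)^{T−1} = (T−1) · (1 − 1/T)^{T−2}, and moreover for every natural number k ≥ 1, (k : ℝ) · (1 − 1/T)^{k−1} ≤ T · (1 − 1/T)^{T−1}. That is, among positive integers k, the function k ↦ k(1−1/T)^{k−1} is maximized at both k = T−1 and k = T, and these two choices yield equal values. -/
/-!
Write `x = 1 - 1/T` and `g m = (m + 1) x^m`, so that `k x^(k-1) = g (k-1)`. Consecutive values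
differ by `g (m+1) - g m = ((m + 2) x - (m + 1)) x^m = (T - (m + 2))/T · x^m`, so `g` increases
up to `m = T - 2`, takes the same value at `T - 2` and `T - 1`, and decreases from there on:
its maximum over `ℕ` is attained at `T - 1` (and at `T - 2`).
-/

theorem Nat.le_of_le_succ_of_succ_le {α : Type*} [Preorder α] {f : ℕ → α} {n : ℕ}
    (hup : ∀ m < n, f m ≤ f (m + 1)) (hdown : ∀ m ≥ n, f (m + 1) ≤ f m) (m : ℕ) :
    f m ≤ f n := by
  rcases le_total m n with h | h
  · refine monotoneOn_of_le_succ Set.ordConnected_Iic (fun a _ _ ha ↦ ?_) h le_rfl h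
    rw [Order.succ_eq_add_one] at ha ⊢
    exact hup a (Set.mem_Iic.mp ha)
  · exact antitoneOn_nat_Ici_of_succ_le hdown (le_refl n) h h

theorem succ_mul_pow_succ_sub {R : Type*} [CommRing R] (x : R) (m : ℕ) :
    ((m + 1 : ℕ) + 1 : R) * x ^ (m + 1) - ((m : R) + 1) * x ^ m
      = (((m : R) + 2) * x - ((m : R) + 1)) * x ^ m := by
  push_cast
  ring

section SuccMulPow

variable {R : Type*} [CommRing R] [PartialOrder R] [IsOrderedRing R] {x : R}

theorem succ_mul_pow_le_succ_mul_pow_succ (hx : 0 ≤ x) {m : ℕ}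
    (h : (m : R) + 1 ≤ ((m : R) + 2) * x) :
    ((m : R) + 1) * x ^ m ≤ ((m + 1 : ℕ) + 1 : R) * x ^ (m + 1) :=
  sub_nonneg.mp <| succ_mul_pow_succ_sub x m ▸
    mul_nonneg (sub_nonneg.mpr h) (pow_nonneg hx m)

theorem succ_mul_pow_succ_le_succ_mul_pow (hx : 0 ≤ x) {m : ℕ}
    (h : ((m : R) + 2) * x ≤ (m : R) + 1) :
    ((m + 1 : ℕ) + 1 : R) * x ^ (m + 1) ≤ ((m : R) + 1) * x ^ m :=
  sub_nonpos.mp <| succ_mul_pow_succ_sub x m ▸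
    mul_nonpos_of_nonpos_of_nonneg (sub_nonpos.mpr h) (pow_nonneg hx m)

end SuccMulPow

theorem add_two_mul_one_sub_inv_sub {K : Type*} [Field K] (a T : K) (hT : T ≠ 0) :
    (a + 2) * (1 - 1 / T) - (a + 1) = (T - (a + 2)) / T := by
  field_simp
  ring

section OneSubInv

variable {K : Type*} [Field K] [LinearOrder K] [IsStrictOrderedRing K]

theorem add_one_le_add_two_mul_one_sub_inv {a T : K} (hT : 0 < T) (h : a + 2 ≤ T) :
    a + 1 ≤ (a + 2) * (1 - 1 / T) :=
  sub_nonneg.mp <| add_two_mul_one_sub_inv_sub a T hT.ne' ▸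
    div_nonneg (sub_nonneg.mpr h) hT.le

theorem add_two_mul_one_sub_inv_le_add_one {a T : K} (hT : 0 < T) (h : T ≤ a + 2) :
    (a + 2) * (1 - 1 / T) ≤ a + 1 :=
  sub_nonpos.mp <| add_two_mul_one_sub_inv_sub a T hT.ne' ▸
    div_nonpos_of_nonpos_of_nonneg (sub_nonpos.mpr h) hT.le

end OneSubInv

/-- for `T ≥ 2`, `T·(1−1/T)^{T−1} = (T−1)·(1−1/T)^{T−2}`, and for
every integer `k ≥ 1`, `k·(1−1/T)^{k−1} ≤ T·(1−1/T)^{T−1}`: among positive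
integers, `k ↦ k(1−1/T)^{k−1}` is maximized at both `k = T−1` and `k = T`,
which yield equal values. -/
theorem integer_maximizers (T : ℕ) (hT : 2 ≤ T) :
    (T : ℝ) * (1 - 1 / (T : ℝ)) ^ (T - 1) =
      ((T : ℝ) - 1) * (1 - 1 / (T : ℝ)) ^ (T - 2) ∧
    ∀ k : ℕ, 1 ≤ k →
      (k : ℝ) * (1 - 1 / (T : ℝ)) ^ (k - 1) ≤ (T : ℝ) * (1 - 1 / (T : ℝ)) ^ (T - 1) := by
  have hT0 : (0 : ℝ) < T := by positivity
  set x : ℝ := 1 - 1 / (T : ℝ)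
  have hx : 0 ≤ x :=
    sub_nonneg.mpr <| (div_le_one hT0).mpr (by exact_mod_cast hT.trans' one_le_two)
  refine ⟨?_, fun k hk ↦ ?_⟩
  · obtain ⟨n, rfl⟩ := Nat.exists_eq_add_of_le hT
    have hTx : ((2 + n : ℕ) : ℝ) * x = ((2 + n : ℕ) : ℝ) - 1 := by
      rw [mul_one_sub, mul_one_div_cancel hT0.ne']
    rw [show 2 + n - 1 = n + 1 by omega, show 2 + n - 2 = n by omega, pow_succ, ← hTx]
    ring
  · have hmax := Nat.le_of_le_succ_of_succ_le (f := fun m : ℕ ↦ ((m : ℝ) + 1) * x ^ m) (n := T - 1)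
      (fun m hm ↦ succ_mul_pow_le_succ_mul_pow_succ hx <|
        add_one_le_add_two_mul_one_sub_inv hT0 (by exact_mod_cast (by omega : m + 2 ≤ T)))
      (fun m hm ↦ succ_mul_pow_succ_le_succ_mul_pow hx <|
        add_two_mul_one_sub_inv_le_add_one hT0 (by exact_mod_cast (by omega : T ≤ m + 2)))
      (k - 1)
    have hcast {n : ℕ} (hn : 1 ≤ n) : ((n - 1 : ℕ) : ℝ) + 1 = n := by
      rw [Nat.cast_sub hn]; ring
    simpa only [hcast hk, hcast (one_le_two.trans hT)] using hmax
end
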